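/- Let H be a hypergraph and x ∈ V(H). The number of minimal transversals of H that contain x equals #mtr(H \ H(x)) − #(tr(H) ∩ mtr(H \ H(x))), where # denotes cardinality. -/

import Mathlib

variable {α : Type*} [DecidableEq α]

/-- The vertex set `V(H)` of a hypergraph `H`: the union of its hyperedges. -/
def verts (H : Finset (Finset α)) : Finset α := H.sup id

/-- `H(S)`: the set of hyperedges of `H` meeting `S`. -/
def edgesMeeting (H : Finset (Finset α)) (S : Finset α) : Finset (Finset α) :=
  H.filter fun e => (e ∩ S).Nonempty

/-- `T` is a transversal of `H`: `T ⊆ V(H)` and `T` meets every hyperedge. -/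
def IsTransversal (H : Finset (Finset α)) (T : Finset α) : Prop :=
  T ⊆ verts H ∧ ∀ e ∈ H, (T ∩ e).Nonempty

/-- `tr H`: the set of transversals of `H`. -/
def tr (H : Finset (Finset α)) : Finset (Finset α) :=
  (verts H).powerset.filter fun T => ∀ e ∈ H, (T ∩ e).Nonempty

/-- `mtr H`: the set of minimal transversals of `H`. -/
def mtr (H : Finset (Finset α)) : Finset (Finset α) :=
  (tr H).filter fun T => ∀ x ∈ T, T.erase x ∉ tr H

/-- `T` is a `B`-blocked transversal of `H'`: a transversal of `H'` such that every `x ∈ T`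
has a private hyperedge in `H' \ H'(B)`. -/
def IsBlockedTr (B : Finset α) (H' : Finset (Finset α)) (T : Finset α) : Prop :=
  IsTransversal H' T ∧ ∀ x ∈ T, ∃ e ∈ H' \ edgesMeeting H' B, e ∩ T = {x}

/-- `btr_B(H')`: the set of `B`-blocked transversals of `H'`. -/
def btr (B : Finset α) (H' : Finset (Finset α)) : Finset (Finset α) :=
  (tr H').filter fun T => ∀ x ∈ T, ∃ e ∈ H' \ edgesMeeting H' B, e ∩ T = {x}

/-- `btr_B(H', S)`: the `B`-blocked transversals of `H'` included in `S`. -/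
def btrS (B : Finset α) (H' : Finset (Finset α)) (S : Finset α) : Finset (Finset α) :=
  (btr B H').filter fun T => T ⊆ S

/-!
A transversal is minimal iff each of its vertices has a private edge, one meeting the
transversal in that vertex alone. If `T ∋ x` is a minimal transversal of `H`, the private edges
of the other vertices avoid `x`, so `T \ {x}` is a minimal transversal of `H' = H \ H(x)`, and it
is not a transversal of `H` by minimality of `T`. Conversely, if `S ∈ mtr H' \ tr H`, an edge
of `H` missed by `S` must contain `x` and serves as the private edge of `x` in `S ∪ {x} ∈ mtr H`.
Hence `T ↦ T \ {x}` is a bijection onto `mtr H' \ tr H`.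
-/

open Finset

variable {H : Finset (Finset α)} {S T : Finset α} {x y : α}

lemma mem_verts : y ∈ verts H ↔ ∃ e ∈ H, y ∈ e := by
  simp [verts, mem_sup]

lemma verts_mono {H₁ H₂ : Finset (Finset α)} (h : H₁ ⊆ H₂) : verts H₁ ⊆ verts H₂ :=
  sup_mono h

lemma mem_tr : T ∈ tr H ↔ T ⊆ verts H ∧ ∀ e ∈ H, (T ∩ e).Nonempty := by
  simp [tr]

lemma mem_sdiff_edgesMeeting_singleton {e : Finset α} :
    e ∈ H \ edgesMeeting H {x} ↔ e ∈ H ∧ x ∉ e := by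
  simp +contextual [edgesMeeting, Finset.Nonempty]

lemma notMem_verts_sdiff_edgesMeeting_singleton : x ∉ verts (H \ edgesMeeting H {x}) := by
  simp only [mem_verts, mem_sdiff_edgesMeeting_singleton]
  rintro ⟨e, ⟨-, hxe⟩, hxe'⟩
  exact hxe hxe'

lemma subset_verts_of_forall_private (h : ∀ y ∈ T, ∃ e ∈ H, T ∩ e = {y}) : T ⊆ verts H := by
  intro y hy
  obtain ⟨e, he, hTe⟩ := h y hy
  exact mem_verts.2 ⟨e, he, (mem_inter.1 (hTe ▸ mem_singleton_self y)).2⟩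

lemma erase_mem_tr_iff (hT : T ∈ tr H) : T.erase y ∈ tr H ↔ ∀ e ∈ H, T ∩ e ≠ {y} := by
  rw [mem_tr] at hT ⊢
  refine ⟨fun h e he hTe => ?_, fun h => ⟨(erase_subset y T).trans hT.1, fun e he => ?_⟩⟩
  · obtain ⟨z, hz⟩ := h.2 e he
    rw [erase_inter, hTe] at hz
    simp at hz
  · rw [erase_inter, nonempty_iff_ne_empty, Ne, erase_eq_empty_iff, not_or]
    exact ⟨(hT.2 e he).ne_empty, h e he⟩

lemma mem_mtr_iff :
    T ∈ mtr H ↔ (∀ e ∈ H, (T ∩ e).Nonempty) ∧ ∀ y ∈ T, ∃ e ∈ H, T ∩ e = {y} := by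
  constructor
  · intro hT
    obtain ⟨hTtr, hmin⟩ := mem_filter.1 hT
    refine ⟨(mem_tr.1 hTtr).2, fun y hy => ?_⟩
    simpa [erase_mem_tr_iff hTtr] using hmin y hy
  · rintro ⟨hmeet, hpriv⟩
    have hTtr : T ∈ tr H := mem_tr.2 ⟨subset_verts_of_forall_private hpriv, hmeet⟩
    refine mem_filter.2 ⟨hTtr, fun y hy => ?_⟩
    rw [erase_mem_tr_iff hTtr]
    push Not
    exact hpriv y hy

lemma erase_mem_mtr_sdiff_edgesMeeting (hT : T ∈ mtr H) (hxT : x ∈ T) :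
    T.erase x ∈ mtr (H \ edgesMeeting H {x}) := by
  obtain ⟨hmeet, hpriv⟩ := mem_mtr_iff.1 hT
  simp only [mem_mtr_iff, mem_sdiff_edgesMeeting_singleton]
  refine ⟨fun e ⟨he, hxe⟩ => ?_, fun y hy => ?_⟩
  · rw [erase_inter, erase_eq_of_notMem (fun h => hxe (mem_inter.1 h).2)]
    exact hmeet e he
  · obtain ⟨hyx, hyT⟩ := mem_erase.1 hy
    obtain ⟨e, he, hTe⟩ := hpriv y hyT
    have hxe : x ∉ e := fun hxe => hyx (mem_singleton.1 (hTe ▸ mem_inter.2 ⟨hxT, hxe⟩)).symm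
    refine ⟨e, ⟨he, hxe⟩, ?_⟩
    rw [erase_inter, hTe, erase_eq_of_notMem (mem_singleton.not.2 hyx.symm)]

lemma notMem_of_mem_mtr_sdiff_edgesMeeting (hS : S ∈ mtr (H \ edgesMeeting H {x})) :
    x ∉ S := fun hxS => notMem_verts_sdiff_edgesMeeting_singleton
  (subset_verts_of_forall_private (mem_mtr_iff.1 hS).2 hxS)

lemma insert_mem_mtr (hS : S ∈ mtr (H \ edgesMeeting H {x})) (hSH : S ∉ tr H) :
    insert x S ∈ mtr H := by
  obtain ⟨hmeet, hpriv⟩ := mem_mtr_iff.1 hS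
  simp only [mem_sdiff_edgesMeeting_singleton] at hmeet hpriv
  have hx_priv : ∃ e ∈ H, insert x S ∩ e = {x} := by
    have hSV : S ⊆ verts H := (subset_verts_of_forall_private (mem_mtr_iff.1 hS).2).trans
      (verts_mono sdiff_subset)
    obtain ⟨e, he, hSe⟩ : ∃ e ∈ H, ¬ (S ∩ e).Nonempty := by
      by_contra! h
      exact hSH (mem_tr.2 ⟨hSV, h⟩)
    have hxe : x ∈ e := by_contra fun hxe => hSe (hmeet e ⟨he, hxe⟩)
    exact ⟨e, he, by rw [insert_inter_of_mem hxe, not_nonempty_iff_eq_empty.1 hSe, insert_empty]⟩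
  refine mem_mtr_iff.2 ⟨fun e he => ?_, fun y hy => ?_⟩
  · by_cases hxe : x ∈ e
    · exact ⟨x, mem_inter.2 ⟨mem_insert_self x S, hxe⟩⟩
    · exact (hmeet e ⟨he, hxe⟩).mono (inter_subset_inter_right (subset_insert x S))
  rcases mem_insert.1 hy with rfl | hyS
  · exact hx_priv
  · obtain ⟨e, ⟨he, hxe⟩, hSe⟩ := hpriv y hyS
    exact ⟨e, he, by rw [insert_inter_of_notMem hxe, hSe]⟩

theorem card_mtr_containing_general (H : Finset (Finset α)) (x : α) :
    ((mtr H).filter fun T => x ∈ T).card =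
      (mtr (H \ edgesMeeting H {x})).card -
        (tr H ∩ mtr (H \ edgesMeeting H {x})).card := by
  rw [← card_sdiff]
  refine card_nbij' (·.erase x) (insert x) (fun T hT => ?_) (fun S hS => ?_)
    (fun T hT => ?_) (fun S hS => ?_)
  · obtain ⟨hT, hxT⟩ := mem_filter.1 hT
    exact mem_sdiff.2 ⟨erase_mem_mtr_sdiff_edgesMeeting hT hxT, (mem_filter.1 hT).2 x hxT⟩
  · obtain ⟨hS, hSH⟩ := mem_sdiff.1 hS
    exact mem_filter.2 ⟨insert_mem_mtr hS hSH, mem_insert_self x S⟩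
  · exact insert_erase (mem_filter.1 hT).2
  · exact erase_insert (notMem_of_mem_mtr_sdiff_edgesMeeting (mem_sdiff.1 hS).1)

/-- The number of minimal transversals of `H` containing `x` equals
`#mtr(H \ H(x)) − #(tr(H) ∩ mtr(H \ H(x)))`. -/
theorem card_mtr_containing (H : Finset (Finset α)) (x : α) (hx : x ∈ verts H) :
    ((mtr H).filter fun T => x ∈ T).card =
      (mtr (H \ edgesMeeting H {x})).card -
        (tr H ∩ mtr (H \ edgesMeeting H {x})).card :=
  card_mtr_containing_general H x
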